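/- Let B = {B_y}_{y∈Ω_B} be a rank-1 observable on ℂ^d, i.e. each effect B_y equals e_y P_y for some one-dimensional orthogonal projection P_y and some 0 < e_y ≤ 1. Then an observable A = {A_x}_{x∈Ω_A} admits an instrument implementing A that does not disturb B if and only if A_x B_y = B_y A_x for all x ∈ Ω_A and y ∈ Ω_B. -/

import Mathlib

open Matrix
open scoped BigOperators ComplexOrder

/-- If a sum of matrices of the form `Mᴴ * M` vanishes, each `M` vanishes. -/
lemma aux_sum_conjTranspose_mul_self_eq_zero {ι m : Type*} [Fintype ι] [Fintype m]
    (M : ι → Matrix m m ℂ) (h : ∑ i, (M i)ᴴ * M i = 0) (i : ι) : M i = 0 := by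
  ext k j
  have hdiag : ∑ i, ((M i)ᴴ * M i) j j = 0 := by
    rw [← Matrix.sum_apply j j Finset.univ (fun i => (M i)ᴴ * M i), h, Matrix.zero_apply]
  have hnonneg : ∀ i, 0 ≤ ((M i)ᴴ * M i) j j := by
    intro i
    rw [Matrix.mul_apply]
    refine Finset.sum_nonneg fun l _ => ?_
    rw [Matrix.conjTranspose_apply]
    exact star_mul_self_nonneg _
  have hzero : ((M i)ᴴ * M i) j j = 0 :=
    (Finset.sum_eq_zero_iff_of_nonneg fun i _ => hnonneg i).mp hdiag i (Finset.mem_univ i)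
  rw [Matrix.mul_apply] at hzero
  have hterm : star (M i k j) * M i k j = 0 := by
    have hnn : ∀ l ∈ Finset.univ, (0:ℂ) ≤ (M i)ᴴ j l * M i l j := by
      intro l _
      rw [Matrix.conjTranspose_apply]
      exact star_mul_self_nonneg _
    have := (Finset.sum_eq_zero_iff_of_nonneg hnn).mp hzero k (Finset.mem_univ k)
    rwa [Matrix.conjTranspose_apply] at this
  rcases mul_eq_zero.mp hterm with h' | h'
  · exact star_eq_zero.mp h'
  · exact h'

namespace Matrix.PosSemidef
noncomputable def sqrt {d : ℕ} {A : Matrix (Fin d) (Fin d) ℂ} (hA : A.PosSemidef) :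
    Matrix (Fin d) (Fin d) ℂ :=
  (hA.1.eigenvectorUnitary : Matrix (Fin d) (Fin d) ℂ) *
    diagonal (RCLike.ofReal ∘ Real.sqrt ∘ hA.1.eigenvalues) *
    star (hA.1.eigenvectorUnitary : Matrix (Fin d) (Fin d) ℂ)
lemma posSemidef_sqrt {d : ℕ} {A : Matrix (Fin d) (Fin d) ℂ} (hA : A.PosSemidef) :
    hA.sqrt.PosSemidef := by
  unfold sqrt
  exact (posSemidef_diagonal_iff.mpr fun i => by
    simp [Real.sqrt_nonneg]).mul_mul_conjTranspose_same _
lemma sqrt_mul_self {d : ℕ} {A : Matrix (Fin d) (Fin d) ℂ} (hA : A.PosSemidef) :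
    hA.sqrt * hA.sqrt = A := by
  have hspec := hA.1.spectral_theorem
  rw [Unitary.conjStarAlgAut_apply] at hspec
  refine Eq.trans ?_ hspec.symm
  unfold sqrt
  have hUU' : star (hA.1.eigenvectorUnitary : Matrix (Fin d) (Fin d) ℂ) *
      (hA.1.eigenvectorUnitary : Matrix (Fin d) (Fin d) ℂ) = 1 :=
    (Matrix.mem_unitaryGroup_iff').mp hA.1.eigenvectorUnitary.2
  simp only [Matrix.mul_assoc]
  rw [← Matrix.mul_assoc (star _) (hA.1.eigenvectorUnitary : Matrix (Fin d) (Fin d) ℂ), hUU',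
    Matrix.one_mul, ← Matrix.mul_assoc (diagonal _), diagonal_mul_diagonal]
  congr 3
  funext i
  simp only [Function.comp_apply]
  rw [← RCLike.ofReal_mul, Real.mul_self_sqrt (hA.eigenvalues_nonneg i)]
end Matrix.PosSemidef

/-- A matrix commuting with a diagonalizable positive semidefinite matrix commutes with its
square root. -/
lemma aux_commute_sqrt {d : ℕ} {A B : Matrix (Fin d) (Fin d) ℂ} (hA : A.PosSemidef)
    (h : A * B = B * A) : hA.sqrt * B = B * hA.sqrt := by
  set U : Matrix (Fin d) (Fin d) ℂ := (hA.1.eigenvectorUnitary : Matrix (Fin d) (Fin d) ℂ)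
    with hU
  have hUU : U * star U = 1 := (Matrix.mem_unitaryGroup_iff).mp hA.1.eigenvectorUnitary.2
  have hUU' : star U * U = 1 := (Matrix.mem_unitaryGroup_iff').mp hA.1.eigenvectorUnitary.2
  set dvec : Fin d → ℂ := RCLike.ofReal ∘ hA.1.eigenvalues with hdvec
  set dvec' : Fin d → ℂ := RCLike.ofReal ∘ Real.sqrt ∘ hA.1.eigenvalues with hdvec'
  have hspec : A = U * Matrix.diagonal dvec * star U := by
    have h' := hA.1.spectral_theorem; rwa [Unitary.conjStarAlgAut_apply] at h'
  have hsqrt : hA.sqrt = U * Matrix.diagonal dvec' * star U := rfl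
  set C : Matrix (Fin d) (Fin d) ℂ := star U * B * U with hC
  have hCD : Matrix.diagonal dvec * C = C * Matrix.diagonal dvec := by
    have h1 : U * Matrix.diagonal dvec * star U * B = B * (U * Matrix.diagonal dvec * star U) := by
      rw [← hspec]; exact h
    calc Matrix.diagonal dvec * C
        = star U * (U * Matrix.diagonal dvec * star U * B) * U := by
          rw [hC]; simp only [Matrix.mul_assoc, ← Matrix.mul_assoc (star U) U, hUU']
          simp [Matrix.mul_assoc]
      _ = star U * (B * (U * Matrix.diagonal dvec * star U)) * U := by rw [h1]
      _ = C * Matrix.diagonal dvec := by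
          rw [hC]; simp only [Matrix.mul_assoc, ← Matrix.mul_assoc (star U) U, hUU']
          simp [Matrix.mul_assoc]
  have hCD' : Matrix.diagonal dvec' * C = C * Matrix.diagonal dvec' := by
    ext i j
    rw [Matrix.diagonal_mul, Matrix.mul_diagonal]
    have hij : dvec i * C i j = C i j * dvec j := by
      have := congrArg (fun M => M i j) hCD
      simpa [Matrix.diagonal_mul, Matrix.mul_diagonal] using this
    by_cases hc : C i j = 0
    · rw [hc]; ring
    · have hd : dvec i = dvec j := by
        rw [mul_comm (C i j) (dvec j)] at hij
        exact mul_right_cancel₀ hc hij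
      have hev : hA.1.eigenvalues i = hA.1.eigenvalues j := by
        have : ((hA.1.eigenvalues i : ℝ) : ℂ) = ((hA.1.eigenvalues j : ℝ) : ℂ) := hd
        exact_mod_cast this
      have : dvec' i = dvec' j := by
        simp only [hdvec', Function.comp_apply, hev]
      rw [this, mul_comm]
  calc hA.sqrt * B = U * Matrix.diagonal dvec' * (star U * B * U) * star U := by
        rw [hsqrt]; simp only [Matrix.mul_assoc, hUU]; simp [Matrix.mul_assoc]
    _ = U * (Matrix.diagonal dvec' * C) * star U := by rw [hC]; simp [Matrix.mul_assoc]
    _ = U * (C * Matrix.diagonal dvec') * star U := by rw [hCD']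
    _ = B * (U * Matrix.diagonal dvec' * star U) := by
        rw [hC]; simp only [Matrix.mul_assoc, ← Matrix.mul_assoc U (star U), hUU]
        simp [Matrix.mul_assoc]
    _ = B * hA.sqrt := by rw [hsqrt]

/-- If `B` is a rank-1 observable (each effect is a positive multiple of a one-dimensional
orthogonal projection), then `A` can be measured without disturbing `B` if and only if
`A` and `B` commute. -/
theorem nondisturbance_iff_commute_of_rank_one
    {d : ℕ} {ΩA ΩB : Type*} [Fintype ΩA] [Fintype ΩB]
    (A : ΩA → Matrix (Fin d) (Fin d) ℂ) (B : ΩB → Matrix (Fin d) (Fin d) ℂ)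
    (hA : ∀ x, (A x).PosSemidef) (hAsum : ∑ x, A x = 1)
    (hB : ∀ y, (B y).PosSemidef) (hBsum : ∑ y, B y = 1)
    (hrank1 : ∀ y, ∃ (e : ℝ) (P : Matrix (Fin d) (Fin d) ℂ),
      0 < e ∧ e ≤ 1 ∧ P.IsHermitian ∧ P * P = P ∧ P.trace = 1 ∧ B y = (e : ℂ) • P) :
    (∃ (n : ℕ) (K : ΩA → Fin n → Matrix (Fin d) (Fin d) ℂ),
        (∀ x, ∑ α, (K x α)ᴴ * K x α = A x) ∧
        (∀ y, ∑ x, ∑ α, (K x α)ᴴ * B y * K x α = B y)) ↔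
      ∀ x y, A x * B y = B y * A x := by
  constructor
  · rintro ⟨n, K, hK1, hK2⟩ x y
    obtain ⟨e, P, he, he1, hP, hPP, hPtr, hBy⟩ := hrank1 y
    have hene : (e : ℂ) ≠ 0 := by exact_mod_cast he.ne'
    set S : ΩA × Fin n → Matrix (Fin d) (Fin d) ℂ := fun p => K p.1 p.2 with hS
    -- total sum is identity
    have htot : ∑ p : ΩA × Fin n, (S p)ᴴ * S p = 1 := by
      rw [Fintype.sum_prod_type]
      simp only [hS]
      rw [Finset.sum_congr rfl fun x _ => hK1 x, hAsum]
    -- fixed point condition for P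
    have hfix : ∑ p : ΩA × Fin n, (S p)ᴴ * P * S p = P := by
      have h2 := hK2 y
      rw [hBy] at h2
      have h3 : ∑ x, ∑ α, (K x α)ᴴ * ((e:ℂ) • P) * K x α
          = (e:ℂ) • ∑ x, ∑ α, (K x α)ᴴ * P * K x α := by
        rw [Finset.smul_sum]
        refine Finset.sum_congr rfl fun x _ => ?_
        rw [Finset.smul_sum]
        refine Finset.sum_congr rfl fun α _ => ?_
        rw [Matrix.mul_smul, Matrix.smul_mul]
      rw [h3] at h2
      have h4 : ∑ x, ∑ α, (K x α)ᴴ * P * K x α = P := smul_right_injective _ hene h2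
      rw [Fintype.sum_prod_type]
      exact h4
    set Q : Matrix (Fin d) (Fin d) ℂ := 1 - P with hQ
    have hQH : Qᴴ = Q := by
      rw [hQ, Matrix.conjTranspose_sub, Matrix.conjTranspose_one, hP.eq]
    have hQQ : Q * Q = Q := by
      rw [hQ, Matrix.sub_mul, Matrix.mul_sub, Matrix.mul_sub, Matrix.one_mul, Matrix.one_mul,
        Matrix.mul_one, hPP]
      abel
    have hPQ : P * Q = 0 := by
      rw [hQ, Matrix.mul_sub, Matrix.mul_one, hPP, sub_self]
    have hQP : Q * P = 0 := by
      rw [hQ, Matrix.sub_mul, Matrix.one_mul, hPP, sub_self]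
    -- Step 1: P * S p * Q = 0
    have hstep1 : ∀ p : ΩA × Fin n, P * S p * Q = 0 := by
      apply aux_sum_conjTranspose_mul_self_eq_zero
      have hexp : ∀ p : ΩA × Fin n, (P * S p * Q)ᴴ * (P * S p * Q)
          = Q * ((S p)ᴴ * P * S p) * Q := by
        intro p
        rw [Matrix.conjTranspose_mul, Matrix.conjTranspose_mul, hQH, hP.eq]
        simp only [Matrix.mul_assoc]
        rw [← Matrix.mul_assoc P P, hPP]
      rw [Finset.sum_congr rfl fun p _ => hexp p]
      rw [← Finset.sum_mul, ← Finset.mul_sum, hfix]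
      rw [Matrix.mul_assoc, hPQ, Matrix.mul_zero]
    -- Step 2: Q * S p * P = 0
    have hstep2 : ∀ p : ΩA × Fin n, Q * S p * P = 0 := by
      apply aux_sum_conjTranspose_mul_self_eq_zero
      have hexp : ∀ p : ΩA × Fin n, (Q * S p * P)ᴴ * (Q * S p * P)
          = P * ((S p)ᴴ * Q * S p) * P := by
        intro p
        rw [Matrix.conjTranspose_mul, Matrix.conjTranspose_mul, hQH, hP.eq]
        simp only [Matrix.mul_assoc]
        rw [← Matrix.mul_assoc Q Q, hQQ]
      rw [Finset.sum_congr rfl fun p _ => hexp p]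
      have hsumQ : ∑ p : ΩA × Fin n, (S p)ᴴ * Q * S p = Q := by
        have : ∀ p : ΩA × Fin n, (S p)ᴴ * Q * S p
            = (S p)ᴴ * S p - (S p)ᴴ * P * S p := by
          intro p
          rw [hQ, Matrix.mul_sub, Matrix.mul_one, Matrix.sub_mul]
        rw [Finset.sum_congr rfl fun p _ => this p, Finset.sum_sub_distrib, htot, hfix]
      rw [← Finset.sum_mul, ← Finset.mul_sum, hsumQ, Matrix.mul_assoc, hQP, Matrix.mul_zero]
    -- commuting of each Kraus operator with P
    have hcomm : ∀ p : ΩA × Fin n, S p * P = P * S p := by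
      intro p
      have h1 : P * S p * Q = 0 := hstep1 p
      have h2 : Q * S p * P = 0 := hstep2 p
      rw [hQ] at h1 h2
      rw [Matrix.mul_sub, Matrix.mul_one, sub_eq_zero] at h1
      rw [Matrix.sub_mul, Matrix.one_mul, Matrix.sub_mul, sub_eq_zero] at h2
      rw [h2, ← h1]
    have hcommH : ∀ p : ΩA × Fin n, (S p)ᴴ * P = P * (S p)ᴴ := by
      intro p
      have := congrArg Matrix.conjTranspose (hcomm p)
      rw [Matrix.conjTranspose_mul, Matrix.conjTranspose_mul, hP.eq] at this
      exact this.symm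
    -- conclude
    have hAxP : A x * P = P * A x := by
      rw [← hK1 x, Finset.sum_mul, Finset.mul_sum]
      refine Finset.sum_congr rfl fun α _ => ?_
      have h1 : (K x α)ᴴ * K x α * P = (K x α)ᴴ * (P * K x α) := by
        rw [Matrix.mul_assoc, hcomm (x, α)]
      have h2 : P * ((K x α)ᴴ * K x α) = (K x α)ᴴ * (P * K x α) := by
        rw [← Matrix.mul_assoc, ← hcommH (x, α), Matrix.mul_assoc]
      rw [h1, h2]
    rw [hBy, Matrix.mul_smul, Matrix.smul_mul, hAxP]
  · intro hcomm
    refine ⟨1, fun x _ => (hA x).sqrt, ?_, ?_⟩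
    · intro x
      rw [Fin.sum_univ_one, ((hA x).posSemidef_sqrt).1.eq, (hA x).sqrt_mul_self]
    · intro y
      have hsq : ∀ x, ((hA x).sqrt)ᴴ * B y * (hA x).sqrt = B y * A x := by
        intro x
        rw [((hA x).posSemidef_sqrt).1.eq, aux_commute_sqrt (hA x) (hcomm x y),
          Matrix.mul_assoc, (hA x).sqrt_mul_self]
      calc ∑ x, ∑ _α : Fin 1, ((hA x).sqrt)ᴴ * B y * (hA x).sqrt
          = ∑ x, B y * A x := by
            refine Finset.sum_congr rfl fun x _ => ?_
            rw [Fin.sum_univ_one, hsq x]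
        _ = B y * ∑ x, A x := by rw [Finset.mul_sum]
        _ = B y := by rw [hAsum, Matrix.mul_one]
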